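/- Let k_m ∈ ℝ and let z, w ∈ ℂ be such that for all sign choices ε₁, ε₂ ∈ {±1}: (ε₁z + ε₂w)/2 ∉ ℤ and (ε₁z + ε₂w)/2 + k_m ∉ ℤ. Then ∏_{ε₁,ε₂ ∈ {±1}} Γ((ε₁z+ε₂w)/2 + k_m) / Γ((ε₁z+ε₂w)/2) = −(sin(π(z+w)/2) · sin(π(z−w)/2)) / (sin(π(z+w+2k_m)/2) · sin(π(−z+w+2k_m)/2)) · q(z,w), where q(z,w) = (w²−z²) · Γ((z−w)/2+k_m) Γ((−z−w)/2+k_m) / (4 · Γ((z−w)/2−k_m+1) Γ((−z−w)/2−k_m+1)). -/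

import Mathlib

/-!
Put `p = (z + w) / 2` and `m = (z - w) / 2`. The four factors pair up as `p, -p` and `-m, m`.
Within a pair `a, -a`, the reflection formula `Γ(s) Γ(1 - s) = π / sin (π s)` at `s = a` and
`s = a + k` turns `Γ(a + k) / Γ(a)` into
`sin (π a) / sin (π (a + k)) · Γ(1 - a) / Γ(1 - a - k)`, and `Γ(1 - a) = -a Γ(-a)` cancels
the denominator of the partner factor. The two leftover
factors `-p` and `m` combine to `(w² - z²) / 4`.
-/

open Complex Real

namespace Complex

variable {a k : ℂ}

lemma sin_pi_mul_ne_zero (ha : ∀ n : ℤ, a ≠ n) : sin (π * a) ≠ 0 := by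
  rw [Ne, sin_eq_zero_iff, not_exists]
  intro n hn
  exact ha n (mul_left_cancel₀ (ofReal_ne_zero.mpr pi_ne_zero) (by rw [hn]; ring))

lemma Gamma_ne_zero_of_forall_ne_intCast (ha : ∀ n : ℤ, a ≠ n) : Gamma a ≠ 0 :=
  Gamma_ne_zero fun m hm => ha (-m) (by rw [hm]; push_cast; rfl)

lemma Gamma_one_sub_ne_zero_of_forall_ne_intCast (ha : ∀ n : ℤ, a ≠ n) :
    Gamma (1 - a) ≠ 0 :=
  Gamma_ne_zero_of_forall_ne_intCast fun n hn => ha (1 - n) (by push_cast; linear_combination -hn)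

lemma Gamma_add_div_Gamma_eq_sin_div_sin
    (ha : ∀ n : ℤ, a ≠ n) (hak : ∀ n : ℤ, a + k ≠ n) :
    Gamma (a + k) / Gamma a =
      sin (π * a) / sin (π * (a + k)) * (Gamma (1 - a) / Gamma (1 - a - k)) := by
  have hG : Gamma (1 - a - k) ≠ 0 := by
    simpa only [sub_sub] using Gamma_one_sub_ne_zero_of_forall_ne_intCast hak
  have reflect_a : Gamma a = π / sin (π * a) / Gamma (1 - a) :=
    eq_div_of_mul_eq (Gamma_one_sub_ne_zero_of_forall_ne_intCast ha) (Gamma_mul_Gamma_one_sub a)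
  have reflect_ak : Gamma (a + k) = π / sin (π * (a + k)) / Gamma (1 - a - k) :=
    eq_div_of_mul_eq hG (by rw [sub_sub]; exact Gamma_mul_Gamma_one_sub (a + k))
  have := ofReal_ne_zero.mpr pi_ne_zero
  have := sin_pi_mul_ne_zero ha
  have := sin_pi_mul_ne_zero hak
  rw [reflect_a, reflect_ak]
  field_simp

lemma Gamma_add_div_Gamma_mul_Gamma_neg_add_div_Gamma_neg
    (ha : ∀ n : ℤ, a ≠ n) (hak : ∀ n : ℤ, a + k ≠ n) :
    Gamma (a + k) / Gamma a * (Gamma (-a + k) / Gamma (-a)) =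
      -a * sin (π * a) / sin (π * (a + k)) * (Gamma (-a + k) / Gamma (-a - k + 1)) := by
  have hna : ∀ n : ℤ, -a ≠ n := fun n hn => ha (-n) (by push_cast; linear_combination -hn)
  have := Gamma_ne_zero_of_forall_ne_intCast hna
  rw [Gamma_add_div_Gamma_eq_sin_div_sin ha hak, show 1 - a - k = -a - k + 1 by ring,
    sub_eq_neg_add, Gamma_add_one _ fun h => hna 0 (by simpa using h)]
  field_simp

end Complex

theorem stmt4 (km : ℝ) (z w : ℂ)
    (h : ∀ s₁ s₂ : ℂ, (s₁ = 1 ∨ s₁ = -1) → (s₂ = 1 ∨ s₂ = -1) →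
      (∀ n : ℤ, (s₁ * z + s₂ * w) / 2 ≠ (n : ℂ)) ∧
      (∀ n : ℤ, (s₁ * z + s₂ * w) / 2 + (km : ℂ) ≠ (n : ℂ))) :
    (Complex.Gamma ((z + w) / 2 + (km : ℂ)) / Complex.Gamma ((z + w) / 2)) *
      (Complex.Gamma ((z - w) / 2 + (km : ℂ)) / Complex.Gamma ((z - w) / 2)) *
      (Complex.Gamma ((-z + w) / 2 + (km : ℂ)) / Complex.Gamma ((-z + w) / 2)) *
      (Complex.Gamma ((-z - w) / 2 + (km : ℂ)) / Complex.Gamma ((-z - w) / 2)) =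
    -(Complex.sin ((Real.pi : ℂ) * (z + w) / 2) * Complex.sin ((Real.pi : ℂ) * (z - w) / 2)) /
        (Complex.sin ((Real.pi : ℂ) * (z + w + 2 * (km : ℂ)) / 2) *
          Complex.sin ((Real.pi : ℂ) * (-z + w + 2 * (km : ℂ)) / 2)) *
      ((w ^ 2 - z ^ 2) * Complex.Gamma ((z - w) / 2 + (km : ℂ)) *
          Complex.Gamma ((-z - w) / 2 + (km : ℂ)) /
        (4 * Complex.Gamma ((z - w) / 2 - (km : ℂ) + 1) *
          Complex.Gamma ((-z - w) / 2 - (km : ℂ) + 1))) := by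
  obtain ⟨hp, hpk⟩ := h 1 1 (.inl rfl) (.inl rfl)
  obtain ⟨hm, hmk⟩ := h (-1) 1 (.inr rfl) (.inl rfl)
  obtain ⟨p, m, rfl, rfl⟩ : ∃ p m : ℂ, z = p + m ∧ w = p - m :=
    ⟨(z + w) / 2, (z - w) / 2, by ring, by ring⟩
  rw [show (1 * (p + m) + 1 * (p - m)) / 2 = p by ring] at hp hpk
  rw [show (-1 * (p + m) + 1 * (p - m)) / 2 = -m by ring] at hm hmk
  have pair_p := Gamma_add_div_Gamma_mul_Gamma_neg_add_div_Gamma_neg hp hpk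
  have pair_m := Gamma_add_div_Gamma_mul_Gamma_neg_add_div_Gamma_neg hm hmk
  rw [neg_neg, mul_neg, Complex.sin_neg] at pair_m
  rw [show (p + m + (p - m)) / 2 = p by ring, show (-(p + m) + (p - m)) / 2 = -m by ring,
    show (-(p + m) - (p - m)) / 2 = -p by ring, show (p + m - (p - m)) / 2 = m by ring,
    show (π : ℂ) * (p + m + (p - m)) / 2 = π * p by ring,
    show (π : ℂ) * (p + m - (p - m)) / 2 = π * m by ring,
    show (π : ℂ) * (p + m + (p - m) + 2 * km) / 2 = π * (p + km) by ring,
    show (π : ℂ) * (-(p + m) + (p - m) + 2 * km) / 2 = π * (-m + km) by ring]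
  calc _ = (Gamma (p + km) / Gamma p * (Gamma (-p + km) / Gamma (-p))) *
        (Gamma (-m + km) / Gamma (-m) * (Gamma (m + km) / Gamma m)) := by ring
    _ = _ := by
      rw [pair_p, pair_m]
      ring
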